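/- arXiv:1301.4073 — 8 statements merged into one kernel-verified Lean document; each statement's English description precedes it below -/
import Mathlib

section
/- Let S be an integral domain with fraction field K and L a splitting field of the product of monic polynomials g_(1),...,g_(n) in S[X] of degrees m_(1),...,m_(n) ≥ 1. Write g_(k)(X) = ∏_{i∈[1,m_(k)]} (X - γ_(k)i) in L[X]. Define Res(g_(1),...,g_(n)) as the determinant of the M×M matrix A (M = m_(1)+...+m_(n)) whose block of m_(k) rows consists of shifted coefficient rows of ∏_{j≠k} g_(j)(X). Then Res(g_(1),...,g_(n)) = ∏_{1≤k<ℓ≤n} ∏_{(i,j)∈[1,m_(k)]×[1,m_(ℓ)]} (γ_(k)i − γ_(ℓ)j). -/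
open Polynomial Finset

/-- The global column position of an index in the block-structured resultant matrix. -/
def resPos {n : ℕ} {m : Fin n → ℕ} (q : (k : Fin n) × Fin (m k)) : ℕ :=
  (∑ j ∈ Finset.univ.filter (fun j => j < q.1), m j) + (q.2 : ℕ)

/-- The matrix `A(g_(1), …, g_(n))` whose block of `deg g_(k)` rows consists of the
successively shifted coefficient rows of `∏_{j ≠ k} g_(j)`. -/
noncomputable def resMatrix {R : Type*} [CommRing R] {n : ℕ} (g : Fin n → Polynomial R) :
    Matrix ((k : Fin n) × Fin ((g k).natDegree)) ((k : Fin n) × Fin ((g k).natDegree)) R :=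
  fun p q =>
    if (p.2 : ℕ) ≤ resPos q then
      (∏ j ∈ Finset.univ.erase p.1, g j).coeff (resPos q - (p.2 : ℕ))
    else 0

/-- The generalized resultant `Res(g_(1), …, g_(n)) = det A(g_(1), …, g_(n))`. -/
noncomputable def genRes {R : Type*} [CommRing R] {n : ℕ} (g : Fin n → Polynomial R) : R :=
  (resMatrix g).det

/-! Multiply `A` on the right by the transposed Vandermonde matrix `V` of all the roots,
its rows ordered by column position. Row `⟨k, i⟩` of `A` is the coefficient vector of
`X ^ i * ∏_{j ≠ k} g_(j)`, so the entries of `A V` are the values of these polynomials at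
the roots. They vanish at the roots of every `g_(j)` with `j ≠ k`, so `A V` is block
diagonal, and its `k`-th block is the Vandermonde matrix of the roots of `g_(k)` with
columns scaled by `∏_{j ≠ k} g_(j)(γ_(k)i)`. Comparing `det (A V)` with the Vandermonde
determinant `det V` leaves exactly the differences of roots of `g_(k)` and `g_(ℓ)` for
`k < ℓ`. Cancelling `det V` is legitimate for indeterminate roots over `ℤ`, and the identity
specialises to arbitrary roots in any commutative ring. -/

section BlockPositions

variable {n : ℕ} {m : Fin n → ℕ}

theorem sum_Iio_add_le_sum_Iio {k l : Fin n} (h : k < l) :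
    ∑ j ∈ Iio k, m j + m k ≤ ∑ j ∈ Iio l, m j := by
  rw [sum_Iio_add_eq_sum_Iic]
  exact sum_le_sum_of_subset fun j hj => mem_Iio.mpr ((mem_Iic.mp hj).trans_lt h)

theorem resPos_eq_sum_Iio_add (q : (k : Fin n) × Fin (m k)) :
    resPos q = ∑ j ∈ Iio q.1, m j + q.2 := by
  rw [resPos, filter_gt_eq_Iio]

theorem resPos_lt_sum (q : (k : Fin n) × Fin (m k)) : resPos q < ∑ k, m k :=
  calc resPos q < ∑ j ∈ Iio q.1, m j + m q.1 := by
        rw [resPos_eq_sum_Iio_add]; exact Nat.add_lt_add_left q.2.2 _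
    _ = ∑ j ∈ Iic q.1, m j := sum_Iio_add_eq_sum_Iic _
    _ ≤ ∑ k, m k := sum_le_sum_of_subset (subset_univ _)

theorem resPos_lt_resPos_iff {p q : (k : Fin n) × Fin (m k)} :
    resPos p < resPos q ↔ p.1 < q.1 ∨ p.1 = q.1 ∧ (p.2 : ℕ) < q.2 := by
  obtain ⟨k, i⟩ := p
  obtain ⟨l, j⟩ := q
  simp only [resPos_eq_sum_Iio_add]
  rcases lt_trichotomy k l with h | rfl | h
  · have := sum_Iio_add_le_sum_Iio (m := m) h
    have := i.2
    simp only [h, true_or, iff_true]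
    omega
  · simp
  · have := sum_Iio_add_le_sum_Iio (m := m) h
    have := j.2
    simp only [not_lt_of_gt h, h.ne', false_and, or_self, iff_false]
    omega

theorem resPos_injective : Function.Injective (resPos : (k : Fin n) × Fin (m k) → ℕ) := by
  rintro ⟨k, i⟩ ⟨l, j⟩ hpq
  have hlt := resPos_lt_resPos_iff.not.mp hpq.not_lt
  have hgt := resPos_lt_resPos_iff.not.mp hpq.not_gt
  obtain rfl : k = l :=
    le_antisymm (not_lt.mp fun h => hgt (Or.inl h)) (not_lt.mp fun h => hlt (Or.inl h))
  simp only [true_and, not_or, lt_irrefl, not_false_eq_true] at hlt hgt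
  simp only [Sigma.mk.injEq, heq_eq_eq, true_and, Fin.ext_iff]
  omega

noncomputable def resPosEquiv (m : Fin n → ℕ) : (k : Fin n) × Fin (m k) ≃ Fin (∑ k, m k) :=
  Equiv.ofBijective (fun q => ⟨resPos q, resPos_lt_sum q⟩) <|
    (Fintype.bijective_iff_injective_and_card _).mpr
      ⟨fun p q h => resPos_injective (Fin.ext_iff.mp h), by simp⟩

@[simp] theorem resPosEquiv_apply_val (q : (k : Fin n) × Fin (m k)) :
    (resPosEquiv m q : ℕ) = resPos q := rfl

end BlockPositions

section BlockResMatrix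

variable {R : Type*} [CommRing R] {n : ℕ} {m : Fin n → ℕ}

noncomputable def blockResMatrix (m : Fin n → ℕ) (f : Fin n → R[X]) :
    Matrix ((k : Fin n) × Fin (m k)) ((k : Fin n) × Fin (m k)) R :=
  Matrix.of fun p q => (X ^ (p.2 : ℕ) * ∏ j ∈ univ.erase p.1, f j).coeff (resPos q)

theorem resMatrix_eq_blockResMatrix (g : Fin n → R[X]) :
    resMatrix g = blockResMatrix (fun k => (g k).natDegree) g := by
  ext p q
  simp [resMatrix, blockResMatrix, coeff_X_pow_mul']

theorem blockResMatrix_map {T : Type*} [CommRing T] (φ : R →+* T) (f : Fin n → R[X]) :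
    (blockResMatrix m f).map φ = blockResMatrix m fun k => (f k).map φ := by
  ext p q
  simp [blockResMatrix, ← coeff_map, Polynomial.map_mul, Polynomial.map_prod]

def powMatrix (x : (k : Fin n) × Fin (m k) → R) :
    Matrix ((k : Fin n) × Fin (m k)) ((k : Fin n) × Fin (m k)) R :=
  Matrix.of fun q p => x p ^ resPos q

theorem sum_coeff_resPos_mul_pow {h : R[X]} (hh : h.natDegree < ∑ k, m k) (y : R) :
    ∑ q : (k : Fin n) × Fin (m k), h.coeff (resPos q) * y ^ resPos q = h.eval y := by
  rw [eval_eq_sum_range' hh, ← Fin.sum_univ_eq_sum_range]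
  exact Fintype.sum_equiv (resPosEquiv m) _ _ fun q => rfl

theorem natDegree_X_pow_mul_prod_erase_lt {f : Fin n → R[X]} (hf : ∀ k, (f k).natDegree ≤ m k)
    (p : (k : Fin n) × Fin (m k)) :
    (X ^ (p.2 : ℕ) * ∏ j ∈ univ.erase p.1, f j).natDegree < ∑ k, m k :=
  calc _ ≤ (p.2 : ℕ) + ∑ j ∈ univ.erase p.1, m j :=
        (natDegree_mul_le).trans (add_le_add (natDegree_X_pow_le _)
          ((natDegree_prod_le _ _).trans (sum_le_sum fun j _ => hf j)))
    _ < m p.1 + ∑ j ∈ univ.erase p.1, m j := Nat.add_lt_add_right p.2.2 _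
    _ = ∑ k, m k := add_sum_erase _ _ (mem_univ _)

theorem blockResMatrix_mul_powMatrix_apply {f : Fin n → R[X]}
    (hf : ∀ k, (f k).natDegree ≤ m k) (x : (k : Fin n) × Fin (m k) → R)
    (p q : (k : Fin n) × Fin (m k)) :
    (blockResMatrix m f * powMatrix x) p q =
      (X ^ (p.2 : ℕ) * ∏ j ∈ univ.erase p.1, f j).eval (x q) := by
  rw [← sum_coeff_resPos_mul_pow (natDegree_X_pow_mul_prod_erase_lt hf p)]
  rfl

end BlockResMatrix

section Products

variable {M : Type*} [CommMonoid M]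

theorem prod_prod_erase_eq_mul_prod_prod_Ioi {α : Type*} [Fintype α] [LinearOrder α]
    [LocallyFiniteOrderTop α] (F : α → α → M) :
    ∏ k, ∏ l ∈ univ.erase k, F k l =
      (∏ k, ∏ l ∈ Ioi k, F k l) * ∏ k, ∏ l ∈ Ioi k, F l k := by
  have hsplit : ∀ k : α, univ.erase k = Ioi k ∪ univ.filter (· < k) := by
    intro k; ext l
    simp only [mem_erase, mem_univ, and_true, mem_union, mem_Ioi, mem_filter, true_and]
    exact ne_iff_lt_or_gt.trans or_comm
  have hdisj : ∀ k : α, Disjoint (Ioi k) (univ.filter (· < k)) := by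
    intro k; simp only [disjoint_left, mem_Ioi, mem_filter, mem_univ, true_and]
    exact fun _ hk hl => lt_asymm hk hl
  simp_rw [hsplit, prod_union (hdisj _), prod_mul_distrib]
  congr 1
  exact prod_comm' fun k l => by simp

variable {n : ℕ} {m : Fin n → ℕ}

theorem prod_prod_Ioi_resPosEquiv_symm
    (F : (k : Fin n) × Fin (m k) → (k : Fin n) × Fin (m k) → M) :
    ∏ a, ∏ b ∈ Ioi a, F ((resPosEquiv m).symm a) ((resPosEquiv m).symm b) =
      (∏ k, ∏ l ∈ Ioi k, ∏ i, ∏ j, F ⟨k, i⟩ ⟨l, j⟩) *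
        ∏ k, ∏ i, ∏ j ∈ Ioi i, F ⟨k, i⟩ ⟨k, j⟩ := by
  set e := resPosEquiv m
  have hreindex : ∏ a, ∏ b ∈ Ioi a, F (e.symm a) (e.symm b) =
      ∏ p, ∏ q, if resPos p < resPos q then F p q else 1 := by
    simp_rw [← filter_lt_eq_Ioi, prod_filter]
    refine (Fintype.prod_equiv e _ _ fun p => Fintype.prod_equiv e _ _ fun q => ?_).symm
    simp [Fin.lt_def, e]
  have hsplit : ∀ p q : (k : Fin n) × Fin (m k), (if resPos p < resPos q then F p q else 1) =
      (if p.1 < q.1 then F p q else 1) * if p.1 = q.1 ∧ (p.2 : ℕ) < q.2 then F p q else 1 := by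
    intro p q
    simp only [resPos_lt_resPos_iff]
    by_cases hlt : p.1 < q.1
    · simp [hlt, hlt.ne]
    · simp [hlt]
  have hcross : ∏ p, ∏ q, (if p.1 < q.1 then F p q else 1) =
      ∏ k, ∏ l ∈ Ioi k, ∏ i, ∏ j, F ⟨k, i⟩ ⟨l, j⟩ := by
    simp only [Fintype.prod_sigma]
    refine prod_congr rfl fun k _ => ?_
    rw [prod_comm, ← filter_lt_eq_Ioi, prod_filter]
    refine prod_congr rfl fun l _ => ?_
    split_ifs <;> simp
  have hdiag : ∏ p, ∏ q, (if p.1 = q.1 ∧ (p.2 : ℕ) < q.2 then F p q else 1) =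
      ∏ k, ∏ i, ∏ j ∈ Ioi i, F ⟨k, i⟩ ⟨k, j⟩ := by
    simp only [Fintype.prod_sigma]
    refine prod_congr rfl fun k _ => prod_congr rfl fun i _ => ?_
    rw [Fintype.prod_eq_single k fun l hl =>
      prod_eq_one fun j _ => if_neg fun h => hl h.1.symm]
    simp [← filter_lt_eq_Ioi, prod_filter]
  rw [hreindex, prod_congr rfl fun p _ => prod_congr rfl fun q _ => hsplit p q]
  simp_rw [prod_mul_distrib]
  rw [hcross, hdiag]

end Products

section RootPolynomials

open Matrix

variable {R : Type*} [CommRing R] {n : ℕ} {m : Fin n → ℕ} (x : (k : Fin n) × Fin (m k) → R)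

theorem natDegree_prod_X_sub_C_le (k : Fin n) : (∏ i, (X - C (x ⟨k, i⟩))).natDegree ≤ m k :=
  (natDegree_prod_le _ _).trans <| (sum_le_sum fun _ _ => natDegree_X_sub_C_le _).trans (by simp)

noncomputable def rootResMatrix : Matrix ((k : Fin n) × Fin (m k)) ((k : Fin n) × Fin (m k)) R :=
  blockResMatrix m fun k => ∏ i, (X - C (x ⟨k, i⟩))

theorem rootResMatrix_mul_powMatrix_apply (p q : (k : Fin n) × Fin (m k)) :
    (rootResMatrix x * powMatrix x) p q =
      x q ^ (p.2 : ℕ) * ∏ l ∈ univ.erase p.1, ∏ i, (x q - x ⟨l, i⟩) := by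
  simp [rootResMatrix, blockResMatrix_mul_powMatrix_apply (natDegree_prod_X_sub_C_le x),
    eval_prod]

theorem blockTriangular_rootResMatrix_mul_powMatrix :
    (rootResMatrix x * powMatrix x).BlockTriangular Sigma.fst := by
  intro p q hqp
  rw [rootResMatrix_mul_powMatrix_apply]
  exact mul_eq_zero_of_right _ <|
    prod_eq_zero (mem_erase.mpr ⟨hqp.ne, mem_univ _⟩) (prod_eq_zero (mem_univ q.2) (sub_self _))

theorem det_toSquareBlock_rootResMatrix_mul_powMatrix (k : Fin n) :
    ((rootResMatrix x * powMatrix x).toSquareBlock Sigma.fst k).det =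
      (∏ j, ∏ l ∈ univ.erase k, ∏ i, (x ⟨k, j⟩ - x ⟨l, i⟩)) *
        ∏ i, ∏ j ∈ Ioi i, (x ⟨k, j⟩ - x ⟨k, i⟩) := by
  rw [← det_submatrix_equiv_self (Equiv.sigmaSubtype k).symm]
  have hblock : ((rootResMatrix x * powMatrix x).toSquareBlock Sigma.fst k).submatrix
        (Equiv.sigmaSubtype k).symm (Equiv.sigmaSubtype k).symm =
      of fun i j => (∏ l ∈ univ.erase k, ∏ i, (x ⟨k, j⟩ - x ⟨l, i⟩)) *
        (vandermonde fun i => x ⟨k, i⟩)ᵀ i j := by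
    ext i j
    exact (rootResMatrix_mul_powMatrix_apply x _ _).trans (mul_comm _ _)
  rw [hblock, det_mul_row, det_transpose, det_vandermonde]

theorem det_rootResMatrix_mul_powMatrix :
    (rootResMatrix x * powMatrix x).det =
      ∏ k, (∏ j, ∏ l ∈ univ.erase k, ∏ i, (x ⟨k, j⟩ - x ⟨l, i⟩)) *
        ∏ i, ∏ j ∈ Ioi i, (x ⟨k, j⟩ - x ⟨k, i⟩) := by
  rw [(blockTriangular_rootResMatrix_mul_powMatrix x).det_fintype]
  exact prod_congr rfl fun k _ => det_toSquareBlock_rootResMatrix_mul_powMatrix x k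

theorem powMatrix_eq_submatrix_vandermonde :
    powMatrix x = (vandermonde (x ∘ (resPosEquiv m).symm))ᵀ.submatrix
      (resPosEquiv m) (resPosEquiv m) := by
  ext q p
  simp [powMatrix]

theorem det_powMatrix :
    (powMatrix x).det = (∏ k, ∏ l ∈ Ioi k, ∏ i, ∏ j, (x ⟨l, j⟩ - x ⟨k, i⟩)) *
      ∏ k, ∏ i, ∏ j ∈ Ioi i, (x ⟨k, j⟩ - x ⟨k, i⟩) := by
  rw [powMatrix_eq_submatrix_vandermonde, det_submatrix_equiv_self, det_transpose,
    det_vandermonde]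
  exact prod_prod_Ioi_resPosEquiv_symm fun p q => x q - x p

theorem rootResMatrix_map {T : Type*} [CommRing T] (φ : R →+* T) :
    (rootResMatrix x).map φ = rootResMatrix (φ ∘ x) := by
  simp [rootResMatrix, blockResMatrix_map, Polynomial.map_prod]

theorem det_rootResMatrix_of_injective [IsDomain R] (hx : Function.Injective x) :
    (rootResMatrix x).det =
      ∏ k, ∏ l ∈ Ioi k, ∏ i, ∏ j, (x ⟨k, i⟩ - x ⟨l, j⟩) := by
  have hV : (powMatrix x).det ≠ 0 := by
    rw [powMatrix_eq_submatrix_vandermonde, det_submatrix_equiv_self, det_transpose]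
    exact det_vandermonde_ne_zero_iff.mpr (hx.comp (resPosEquiv m).symm.injective)
  apply mul_right_cancel₀ hV
  have hcross : ∏ k, ∏ j, ∏ l ∈ univ.erase k, ∏ i, (x ⟨k, j⟩ - x ⟨l, i⟩) =
      (∏ k, ∏ l ∈ Ioi k, ∏ i, ∏ j, (x ⟨k, i⟩ - x ⟨l, j⟩)) *
        ∏ k, ∏ l ∈ Ioi k, ∏ i, ∏ j, (x ⟨l, j⟩ - x ⟨k, i⟩) := by
    rw [prod_congr rfl fun k _ => prod_comm, prod_prod_erase_eq_mul_prod_prod_Ioi]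
    congr 1
    exact prod_congr rfl fun k _ => prod_congr rfl fun l _ => prod_comm
  rw [← det_mul, det_rootResMatrix_mul_powMatrix, prod_mul_distrib, det_powMatrix, hcross,
    mul_assoc]

theorem det_rootResMatrix :
    (rootResMatrix x).det =
      ∏ k, ∏ l ∈ Ioi k, ∏ i, ∏ j, (x ⟨k, i⟩ - x ⟨l, j⟩) := by
  have hgeneric := congrArg (MvPolynomial.eval₂Hom (Int.castRingHom R) x) <|
    det_rootResMatrix_of_injective _ (MvPolynomial.X_injective (R := ℤ))
  rw [RingHom.map_det, RingHom.mapMatrix_apply, rootResMatrix_map] at hgeneric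
  simpa [Function.comp_def] using hgeneric

end RootPolynomials

theorem resultant_eq_prod_root_differences_general
    {S : Type*} [CommRing S]
    (L : Type*) [Field L] [Algebra S L]
    {n : ℕ} (g : Fin n → Polynomial S)
    (γ : (k : Fin n) → Fin ((g k).natDegree) → L)
    (hroots : ∀ k, (g k).map (algebraMap S L) = ∏ i, (X - C (γ k i))) :
    algebraMap S L (genRes g) =
      ∏ k, ∏ l ∈ Finset.Ioi k, ∏ i, ∏ j, (γ k i - γ l j) := by
  rw [genRes, RingHom.map_det, RingHom.mapMatrix_apply, resMatrix_eq_blockResMatrix,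
    blockResMatrix_map, funext hroots]
  exact det_rootResMatrix (m := fun k => (g k).natDegree) fun q => γ q.1 q.2

/-- **Root-product formula for the generalized resultant.**
If `S` is an integral domain with fraction field `K`, `L` a splitting field over `K` of the
product of the monic polynomials `g_(1), …, g_(n)`, and `g_(k) = ∏_i (X - γ_(k)i)` in `L[X]`,
then `Res(g_(1), …, g_(n)) = ∏_{k<ℓ} ∏_{i,j} (γ_(k)i − γ_(ℓ)j)`. -/
theorem resultant_eq_prod_root_differences
    {S : Type*} [CommRing S] [IsDomain S]
    (K L : Type*) [Field K] [Field L] [Algebra S K] [IsFractionRing S K]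
    [Algebra K L] [Algebra S L] [IsScalarTower S K L]
    {n : ℕ} (g : Fin n → Polynomial S)
    (hmonic : ∀ k, (g k).Monic)
    (hdeg : ∀ k, 1 ≤ (g k).natDegree)
    [Polynomial.IsSplittingField K L ((∏ k, g k).map (algebraMap S K))]
    (γ : (k : Fin n) → Fin ((g k).natDegree) → L)
    (hroots : ∀ k, (g k).map (algebraMap S L) = ∏ i, (X - C (γ k i))) :
    algebraMap S L (genRes g) =
      ∏ k, ∏ l ∈ Finset.Ioi k, ∏ i, ∏ j, (γ k i - γ l j) :=
  resultant_eq_prod_root_differences_general L g γ hroots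
end

section
/- Let R be an integral domain, r ∈ R, and g_(1),...,g_(n), g̃_(1),...,g̃_(n) ∈ R[X] monic polynomials with g_(k) ≡ g̃_(k) mod r for each k ∈ [1,n]. Then Res(g_(1),...,g_(n)) ≡ Res(g̃_(1),...,g̃_(n)) mod r. -/
open Polynomial Finset

private lemma dvd_prod_sub' {R ι : Type*} [CommRing R] (c : R) (s : Finset ι) (f f' : ι → R)
    (h : ∀ i ∈ s, c ∣ f i - f' i) : c ∣ ∏ i ∈ s, f i - ∏ i ∈ s, f' i := by
  classical
  induction s using Finset.induction with
  | empty => simp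
  | @insert a s hx ih =>
    rw [Finset.prod_insert hx, Finset.prod_insert hx]
    have heq : f a * ∏ i ∈ s, f i - f' a * ∏ i ∈ s, f' i
        = (f a - f' a) * ∏ i ∈ s, f i + f' a * (∏ i ∈ s, f i - ∏ i ∈ s, f' i) := by ring
    rw [heq]
    exact dvd_add (Dvd.dvd.mul_right (h a (by simp)) _)
      (Dvd.dvd.mul_left (ih fun i hi => h i (by simp [hi])) _)

private lemma dvd_coeff_of_C_dvd {R : Type*} [CommRing R] {r : R} {p : Polynomial R}
    (h : C r ∣ p) (m : ℕ) : r ∣ p.coeff m := by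
  obtain ⟨q, rfl⟩ := h
  simp [coeff_C_mul]

private lemma dvd_det_sub {R ι : Type*} [CommRing R] [DecidableEq ι] [Fintype ι]
    (c : R) (A B : Matrix ι ι R) (h : ∀ p q, c ∣ A p q - B p q) :
    c ∣ A.det - B.det := by
  classical
  let I : Ideal R := Ideal.span {c}
  let φ := Ideal.Quotient.mk I
  have hmap : A.map φ = B.map φ := by
    ext p q
    simp only [Matrix.map_apply]
    rw [Ideal.Quotient.mk_eq_mk_iff_sub_mem]
    exact Ideal.mem_span_singleton.mpr (h p q)
  have : φ A.det = φ B.det := by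
    rw [RingHom.map_det, RingHom.map_det, RingHom.mapMatrix_apply, RingHom.mapMatrix_apply, hmap]
  rw [Ideal.Quotient.mk_eq_mk_iff_sub_mem] at this
  exact Ideal.mem_span_singleton.mp this

/-- **Congruent tuples of monic polynomials have congruent resultants:**
if `g_(k) ≡ g̃_(k) mod r` for each `k`, then
`Res(g_(1), …, g_(n)) ≡ Res(g̃_(1), …, g̃_(n)) mod r`. -/
theorem genRes_congr
    {R : Type*} [CommRing R] [IsDomain R] (r : R)
    {n : ℕ} (g g' : Fin n → Polynomial R)
    (hmonic : ∀ k, (g k).Monic) (hmonic' : ∀ k, (g' k).Monic)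
    (hcongr : ∀ k, C r ∣ (g k - g' k)) :
    r ∣ (genRes g - genRes g') := by
  classical
  by_cases hu : IsUnit r
  · exact hu.dvd
  -- degrees agree
  have hdeg : ∀ k, (g k).natDegree = (g' k).natDegree := by
    intro k
    by_contra hne
    rcases lt_or_gt_of_ne hne with hlt | hlt
    · have h1 : (g k).coeff ((g' k).natDegree) = 0 :=
        coeff_eq_zero_of_natDegree_lt hlt
      have h2 : (g' k).coeff ((g' k).natDegree) = 1 := (hmonic' k).coeff_natDegree
      have := dvd_coeff_of_C_dvd (hcongr k) ((g' k).natDegree)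
      rw [coeff_sub, h1, h2, zero_sub] at this
      exact hu (isUnit_of_dvd_unit this (by simp : IsUnit (-1 : R)))
    · have h1 : (g' k).coeff ((g k).natDegree) = 0 :=
        coeff_eq_zero_of_natDegree_lt hlt
      have h2 : (g k).coeff ((g k).natDegree) = 1 := (hmonic k).coeff_natDegree
      have := dvd_coeff_of_C_dvd (hcongr k) ((g k).natDegree)
      rw [coeff_sub, h1, h2, sub_zero] at this
      exact hu (isUnit_of_dvd_one this)
  set e : ((k : Fin n) × Fin ((g k).natDegree)) ≃ ((k : Fin n) × Fin ((g' k).natDegree)) :=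
    Equiv.sigmaCongrRight (fun k => finCongr (hdeg k)) with he
  have hres : genRes g' = ((resMatrix g').submatrix e e).det := by
    rw [Matrix.det_submatrix_equiv_self]
    rfl
  rw [hres]
  unfold genRes
  apply dvd_det_sub
  intro p q
  have hpos : ∀ q : (k : Fin n) × Fin ((g k).natDegree), resPos (e q) = resPos q := by
    intro q
    simp only [resPos, he, Equiv.sigmaCongrRight_apply, Sigma.map, finCongr_apply, Fin.coe_cast]
    exact congrArg (· + ((q.2 : ℕ))) (Finset.sum_congr rfl fun j _ => (hdeg j).symm)
  have hfst : ∀ q : (k : Fin n) × Fin ((g k).natDegree), (e q).1 = q.1 := fun _ => rfl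
  have hsnd : ∀ q : (k : Fin n) × Fin ((g k).natDegree), ((e q).2 : ℕ) = (q.2 : ℕ) :=
    fun _ => rfl
  simp only [resMatrix, Matrix.submatrix_apply, hpos, hfst, hsnd]
  split
  · rw [← coeff_sub]
    apply dvd_coeff_of_C_dvd
    exact dvd_prod_sub' _ _ _ _ (fun i _ => hcongr i)
  · simp
end

section
/- Let R be a discrete valuation ring with uniformizer π, A ∈ R^{k×k} with det A ≠ 0 and elementary divisors π^{e_1} | ... | π^{e_k}, e := e_1+...+e_k. Suppose d_1 ≥ d_2 ≥ ... ≥ d_k ≥ 0 are integers such that for each i, π^{d_i} divides every entry of column i of A. Then e_k ≤ e − (d_2 + ... + d_k). -/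
/-!
Write `X = d_2 + ⋯ + d_k`. Every `(k-1)`-minor of `A` omits one column `i`, so it is divisible by
`∏_{l ≠ i} π^{d_l}`, hence by `π^X` since `d_1` is the largest exponent. Thus `π^X` divides every
entry of `adj A`, hence of `adj (S A T) = adj T · adj A · adj S`. The last diagonal entry of the
adjugate of `diag(π^{e_i})` is `π^{e - e_k}`, so `X ≤ e - e_k`.
-/

open Matrix Finset

theorem Finset.sum_erase_le_sum_erase {ι M : Type*} [DecidableEq ι] [AddCommMonoid M]
    [PartialOrder M] [IsOrderedCancelAddMonoid M] {s : Finset ι} {f : ι → M} {i j : ι}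
    (hi : i ∈ s) (hj : j ∈ s) (h : f i ≤ f j) :
    ∑ x ∈ s.erase j, f x ≤ ∑ x ∈ s.erase i, f x :=
  le_of_add_le_add_right <| calc
    ∑ x ∈ s.erase j, f x + f j = ∑ x ∈ s.erase i, f x + f i := by
      rw [sum_erase_add _ _ hi, sum_erase_add _ _ hj]
    _ ≤ ∑ x ∈ s.erase i, f x + f j := add_le_add_right h _

namespace Matrix

variable {R : Type*} [CommRing R]

theorem dvd_mul_mul_apply {l m n o : Type*} [Fintype m] [Fintype n] {a : R}
    {M : Matrix m n R} (h : ∀ i j, a ∣ M i j) (N : Matrix l m R) (P : Matrix n o R)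
    (i : l) (j : o) : a ∣ (N * M * P) i j :=
  dvd_sum fun b _ => Dvd.dvd.mul_right (dvd_sum fun c _ => (h c b).mul_left _) _

theorem prod_erase_dvd_adjugate_apply {n : Type*} [Fintype n] [DecidableEq n]
    (A : Matrix n n R) (c : n → R) (hc : ∀ i j, c i ∣ A j i) (i j : n) :
    ∏ l ∈ univ.erase i, c l ∣ A.adjugate i j := by
  choose B hB using fun j i => hc i j
  have hA : A = of B * diagonal c := by
    ext j i
    simp [hB j i, mul_comm]
  rw [hA, adjugate_mul_distrib, adjugate_diagonal, diagonal_mul]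
  exact dvd_mul_right _ _

end Matrix

theorem last_elementary_divisor_le_general
    {R : Type*} [CommRing R] [IsDomain R]
    (π : R) (hπ : Irreducible π)
    (k : ℕ) (A : Matrix (Fin (k + 1)) (Fin (k + 1)) R)
    (e : Fin (k + 1) → ℕ)
    (S T : Matrix (Fin (k + 1)) (Fin (k + 1)) R)
    (hSAT : S * A * T = Matrix.diagonal fun i => π ^ e i)
    (d : Fin (k + 1) → ℕ) (hd : Antitone d)
    (hcol : ∀ i j, π ^ d i ∣ A j i) :
    e (Fin.last k) + ∑ i ∈ Finset.univ.erase 0, d i ≤ ∑ i, e i := by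
  have hadjA (i j) : π ^ ∑ l ∈ univ.erase 0, d l ∣ A.adjugate i j := by
    refine (pow_dvd_pow π (sum_erase_le_sum_erase (mem_univ i) (mem_univ 0)
      (hd (Fin.zero_le i)))).trans ?_
    simpa only [prod_pow_eq_pow_sum] using A.prod_erase_dvd_adjugate_apply _ hcol i j
  have hadjD := dvd_mul_mul_apply hadjA T.adjugate S.adjugate (Fin.last k) (Fin.last k)
  rw [← adjugate_mul_distrib, ← adjugate_mul_distrib, ← Matrix.mul_assoc, hSAT,
    adjugate_diagonal, diagonal_apply_eq, prod_pow_eq_pow_sum,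
    pow_dvd_pow_iff hπ.ne_zero hπ.not_isUnit] at hadjD
  rw [← sum_erase_add _ _ (mem_univ (Fin.last k))]
  omega

/-- **Bound on the largest elementary divisor:** if `π^{d_i}` divides every entry of column
`i` of `A` with `d_1 ≥ … ≥ d_k ≥ 0`, and `A` has elementary divisors `π^{e_1} ∣ … ∣ π^{e_k}`
with `e = e_1 + ⋯ + e_k`, then `e_k ≤ e − (d_2 + ⋯ + d_k)`. -/
theorem last_elementary_divisor_le
    {R : Type*} [CommRing R] [IsDomain R] [IsDiscreteValuationRing R]
    (π : R) (hπ : Irreducible π)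
    (k : ℕ) (A : Matrix (Fin (k + 1)) (Fin (k + 1)) R) (hA : A.det ≠ 0)
    (e : Fin (k + 1) → ℕ) (he : Monotone e)
    (S T : Matrix (Fin (k + 1)) (Fin (k + 1)) R)
    (hS : IsUnit S.det) (hT : IsUnit T.det)
    (hSAT : S * A * T = Matrix.diagonal fun i => π ^ e i)
    (d : Fin (k + 1) → ℕ) (hd : Antitone d)
    (hcol : ∀ i j, π ^ d i ∣ A j i) :
    e (Fin.last k) + ∑ i ∈ Finset.univ.erase 0, d i ≤ ∑ i, e i :=
  last_elementary_divisor_le_general π hπ k A e S T hSAT d hd hcol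
end

section
/- Let R be a discrete valuation ring with uniformizer π, A ∈ R^{k×k} with det A ≠ 0, e := val_π(det A), and integers d_1 ≥ ... ≥ d_k ≥ 0 such that π^{d_i} divides every entry of column i of A for each i. Write e' := e − (d_2 + ... + d_k). Then: (a) for every y ∈ π^{e'} R^{1×k} there exists x ∈ R^{1×k} with xA = y; (b) if u ≥ e' and x ∈ R^{1×k} satisfies xA ∈ R^{1×k} π^u, then x ∈ R^{1×k} π^{u−e'}. -/
/-! Write `D = d_2 + ⋯ + d_k`. Every entry of `adj A` is a `(k-1) × (k-1)` minor
missing one column `i`, hence divisible by `π ^ (∑_{c ≠ i} d_c)`, and since `d_1` is the largest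
exponent that sum is at least `D`. Likewise `π ^ (d_1 + ⋯ + d_k)` divides `det A`, so `D ≤ e`.
As `det A = π ^ e · unit`, cancelling `π ^ D` from `adj A · A = A · adj A = det A · 1` yields
`B` with `B A = A B = π ^ (e - D) · 1`; then `x = z B` solves `x A = π ^ (e - D) z`, and
`π ^ (e - D) x = (x A) B` gives the divisibility of `x`. -/

open Matrix Finset

theorem Finset.sum_erase_le_sum_erase_of_le {ι M : Type*} [DecidableEq ι] [AddCommMonoid M]
    [PartialOrder M] [IsOrderedCancelAddMonoid M] {s : Finset ι} {i j : ι}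
    (hi : i ∈ s) (hj : j ∈ s) (f : ι → M) (hij : f i ≤ f j) :
    ∑ x ∈ s.erase j, f x ≤ ∑ x ∈ s.erase i, f x := by
  refine le_of_add_le_add_right (a := f j) ?_
  calc ∑ x ∈ s.erase j, f x + f j = ∑ x ∈ s.erase i, f x + f i := by
        rw [sum_erase_add s f hj, sum_erase_add s f hi]
    _ ≤ ∑ x ∈ s.erase i, f x + f j := by gcongr

namespace Matrix

theorem dvd_vecMul_of_dvd {m n R : Type*} [Fintype m] [NonUnitalSemiring R] {b : R} {v : m → R}
    (hv : ∀ i, b ∣ v i) (B : Matrix m n R) (j : n) : b ∣ (v ᵥ* B) j :=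
  dvd_sum fun i _ => (hv i).mul_right _

theorem exists_vecMul_eq_of_mul_eq_smul_one {n R : Type*} [Fintype n] [DecidableEq n]
    [CommSemiring R] {A B : Matrix n n R} {s : R} (hBA : B * A = s • 1)
    {y : n → R} (hy : ∀ i, s ∣ y i) : ∃ x, x ᵥ* A = y := by
  choose z hz using hy
  refine ⟨z ᵥ* B, ?_⟩
  rw [vecMul_vecMul, hBA, vecMul_smul, vecMul_one]
  exact funext fun i => (hz i).symm

variable {n R : Type*} [Fintype n] [DecidableEq n] [CommRing R]

theorem pow_sum_dvd_det_of_pow_dvd_col (A : Matrix n n R) (a : R) (d : n → ℕ)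
    (hcol : ∀ i j, a ^ d i ∣ A j i) : a ^ ∑ i, d i ∣ A.det := by
  rw [det_apply', ← prod_pow_eq_pow_sum]
  exact dvd_sum fun σ _ => (prod_dvd_prod_of_dvd _ _ fun i _ => hcol i (σ i)).mul_left _

theorem pow_sum_erase_dvd_adjugate_of_pow_dvd_col (A : Matrix n n R) (a : R) (d : n → ℕ)
    (hcol : ∀ i j, a ^ d i ∣ A j i) (i j : n) :
    a ^ ∑ c ∈ univ.erase i, d c ∣ A.adjugate i j := by
  have hsum : ∑ c, Function.update d i 0 c = ∑ c ∈ univ.erase i, d c := by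
    rw [sum_update_of_mem (mem_univ i), zero_add, sdiff_singleton_eq_erase]
  -- `adjugate_apply` puts a standard basis row into `A`, only spoiling the bound on column `i`.
  rw [adjugate_apply, ← hsum]
  refine pow_sum_dvd_det_of_pow_dvd_col _ a _ fun c r => ?_
  rcases eq_or_ne c i with rfl | hc
  · simp
  rcases eq_or_ne r j with rfl | hr
  · simp [Pi.single_eq_of_ne hc]
  · simpa [updateRow_ne hr, Function.update_of_ne hc] using hcol c r

theorem pow_sub_dvd_of_pow_dvd_vecMul [IsDomain R] {A B : Matrix n n R} {a : R} (ha : a ≠ 0)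
    {f u : ℕ} (hAB : A * B = a ^ f • 1) (hfu : f ≤ u) {x : n → R}
    (hx : ∀ i, a ^ u ∣ (x ᵥ* A) i) (i : n) : a ^ (u - f) ∣ x i := by
  have hxB : a ^ f • x = (x ᵥ* A) ᵥ* B := by
    rw [vecMul_vecMul, hAB, vecMul_smul, vecMul_one]
  have hdvd : a ^ f * a ^ (u - f) ∣ a ^ f * x i := by
    rw [← pow_add, Nat.add_sub_cancel' hfu, ← smul_eq_mul, ← Pi.smul_apply, hxB]
    exact dvd_vecMul_of_dvd hx B i
  exact (mul_dvd_mul_iff_left (pow_ne_zero f ha)).mp hdvd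

theorem exists_mul_eq_smul_one_of_dvd_adjugate [IsDomain R] {A : Matrix n n R} {a s : R}
    (ha : a ≠ 0) (hadj : ∀ i j, a ∣ A.adjugate i j) (hdet : Associated (a * s) A.det) :
    ∃ B : Matrix n n R, B * A = s • 1 ∧ A * B = s • 1 := by
  choose B₀ hB₀ using hadj
  obtain ⟨w, hw⟩ := hdet
  have hadj : A.adjugate = a • of B₀ := ext fun i j => hB₀ i j
  have cancel : ∀ M : Matrix n n R, a • M = A.det • 1 → (↑w⁻¹ : R) • M = s • 1 := by
    intro M hM
    rw [← hw, mul_assoc, mul_smul] at hM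
    rw [smul_right_injective _ ha hM, smul_smul, mul_left_comm, Units.inv_mul, mul_one]
  refine ⟨(↑w⁻¹ : R) • of B₀, ?_, ?_⟩
  · rw [smul_mul, cancel]
    rw [← smul_mul, ← hadj, adjugate_mul]
  · rw [Matrix.mul_smul, cancel]
    rw [← Matrix.mul_smul, ← hadj, mul_adjugate]

end Matrix

theorem Irreducible.associated_pow_of_pow_dvd_of_not_pow_succ_dvd {R : Type*} [CommRing R]
    [IsDomain R] [IsDiscreteValuationRing R] {π x : R} (hπ : Irreducible π) {e : ℕ}
    (hdvd : π ^ e ∣ x) (hndvd : ¬ π ^ (e + 1) ∣ x) : Associated (π ^ e) x := by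
  obtain ⟨c, rfl⟩ := hdvd
  refine associated_mul_unit_right _ c (not_not.mp fun hc => hndvd ?_)
  have hmem : c ∈ IsLocalRing.maximalIdeal R := hc
  rw [(IsDiscreteValuationRing.irreducible_iff_uniformizer π).mp hπ,
    Ideal.mem_span_singleton] at hmem
  rw [pow_succ]
  exact mul_dvd_mul_left _ hmem

theorem vecMul_solvable_and_dvd_of_col_dvd_general
    {R : Type*} [CommRing R] [IsDomain R] [IsDiscreteValuationRing R]
    (π : R) (hπ : Irreducible π)
    (k : ℕ) (A : Matrix (Fin (k + 1)) (Fin (k + 1)) R)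
    (e : ℕ) (he : π ^ e ∣ A.det ∧ ¬ π ^ (e + 1) ∣ A.det)
    (d : Fin (k + 1) → ℕ) (hd : Antitone d)
    (hcol : ∀ i j, π ^ d i ∣ A j i) :
    (∀ y : Fin (k + 1) → R,
        (∀ i, π ^ (e - ∑ i ∈ Finset.univ.erase 0, d i) ∣ y i) →
        ∃ x : Fin (k + 1) → R, Matrix.vecMul x A = y) ∧
    (∀ u : ℕ, (e - ∑ i ∈ Finset.univ.erase 0, d i) ≤ u → ∀ x : Fin (k + 1) → R,
        (∀ i, π ^ u ∣ Matrix.vecMul x A i) →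
        ∀ i, π ^ (u - (e - ∑ i ∈ Finset.univ.erase 0, d i)) ∣ x i) := by
  set D := ∑ i ∈ univ.erase 0, d i
  have hDe : D ≤ e := by
    refine (sum_le_sum_of_subset (erase_subset 0 univ)).trans (not_lt.mp fun hlt => he.2 ?_)
    exact (pow_dvd_pow π hlt).trans (A.pow_sum_dvd_det_of_pow_dvd_col π d hcol)
  have hadj (i j : Fin (k + 1)) : π ^ D ∣ A.adjugate i j :=
    (pow_dvd_pow π (sum_erase_le_sum_erase_of_le (mem_univ i) (mem_univ 0) d
      (hd (Fin.zero_le i)))).trans (A.pow_sum_erase_dvd_adjugate_of_pow_dvd_col π d hcol i j)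
  have hdet : Associated (π ^ D * π ^ (e - D)) A.det := by
    rw [← pow_add, Nat.add_sub_cancel' hDe]
    exact hπ.associated_pow_of_pow_dvd_of_not_pow_succ_dvd he.1 he.2
  obtain ⟨B, hBA, hAB⟩ :=
    exists_mul_eq_smul_one_of_dvd_adjugate (pow_ne_zero D hπ.ne_zero) hadj hdet
  exact ⟨fun y hy => exists_vecMul_eq_of_mul_eq_smul_one hBA hy,
    fun u hu x hx => pow_sub_dvd_of_pow_dvd_vecMul hπ.ne_zero hAB hu hx⟩

/-- **Improved solvability and divisibility bounds from columnwise divisibility:**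
with `e = val_π(det A)`, `π^{d_i}` dividing column `i` of `A`, `d_1 ≥ … ≥ d_k`, and
`e' = e − (d_2 + ⋯ + d_k)`:
(a) every row vector `y` with entries divisible by `π^{e'}` is of the form `xA`;
(b) if `u ≥ e'` and the entries of `xA` are divisible by `π^u`, then those of `x` are
divisible by `π^{u−e'}`. -/
theorem vecMul_solvable_and_dvd_of_col_dvd
    {R : Type*} [CommRing R] [IsDomain R] [IsDiscreteValuationRing R]
    (π : R) (hπ : Irreducible π)
    (k : ℕ) (A : Matrix (Fin (k + 1)) (Fin (k + 1)) R) (hA : A.det ≠ 0)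
    (e : ℕ) (he : π ^ e ∣ A.det ∧ ¬ π ^ (e + 1) ∣ A.det)
    (d : Fin (k + 1) → ℕ) (hd : Antitone d)
    (hcol : ∀ i j, π ^ d i ∣ A j i) :
    (∀ y : Fin (k + 1) → R,
        (∀ i, π ^ (e - ∑ i ∈ Finset.univ.erase 0, d i) ∣ y i) →
        ∃ x : Fin (k + 1) → R, Matrix.vecMul x A = y) ∧
    (∀ u : ℕ, (e - ∑ i ∈ Finset.univ.erase 0, d i) ≤ u → ∀ x : Fin (k + 1) → R,
        (∀ i, π ^ u ∣ Matrix.vecMul x A i) →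
        ∀ i, π ^ (u - (e - ∑ i ∈ Finset.univ.erase 0, d i)) ∣ x i) :=
  vecMul_solvable_and_dvd_of_col_dvd_general π hπ k A e he d hd hcol
end

section
/- Let R be a discrete valuation ring with uniformizer π. Let f ∈ R[X] be monic of degree M, and g_(1),...,g_(n) ∈ R[X] monic of degree ≥ 1 with Res(g_(1),...,g_(n)) ≠ 0, t := val_π(Res(g_(1),...,g_(n))), and s ≥ 2t+1 with f(X) ≡ ∏_{k} g_(k)(X) mod π^s. Then there exist monic polynomials g̃_(1),...,g̃_(n) ∈ R[X] with g̃_(k) ≡ g_(k) mod π^{s−t} for all k and f(X) ≡ ∏_k g̃_(k)(X) mod π^{2(s−t)}. Moreover, val_π(Res(g̃_(1),...,g̃_(n))) = t for any such tuple. -/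
/-!
Write `f - ∏ g_k = π^s d` with `deg d < M`. Since `Res(g) = π^t · unit`, Cramer's rule applied to
the transposed system of `A(g)` gives polynomials `H_k` with `deg H_k < deg g_k` and
`∑_k H_k ∏_{j ≠ k} g_j = π^t d`. Then `g̃_k := g_k + π^{s-t} H_k` works: expanding the product,
`∏ g̃_k ≡ ∏ g_k + π^{s-t} · π^t d = f` modulo `π^{2(s-t)}`. Conversely, the entries of `A(g)` are
polynomial in the coefficients of the `g_k`, so `Res(g̃) ≡ Res(g) mod π^{s-t}`, and `s - t ≥ t + 1`
keeps the valuation equal to `t`.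
-/

open Polynomial Finset

section Congruence

variable {R : Type*} [CommRing R]

lemma map_mk_span_singleton_eq_of_C_dvd_sub {p q : R[X]} {a : R} (h : C a ∣ p - q) :
    p.map (Ideal.Quotient.mk (Ideal.span {a})) = q.map (Ideal.Quotient.mk (Ideal.span {a})) := by
  obtain ⟨w, hw⟩ := h
  rw [← sub_eq_zero, ← Polynomial.map_sub, hw, Polynomial.map_mul, Polynomial.map_C,
    Ideal.Quotient.eq_zero_iff_mem.mpr (Ideal.mem_span_singleton_self a), C_0, zero_mul]

lemma Polynomial.Monic.natDegree_eq_of_C_dvd_sub {p q : R[X]} (hp : p.Monic) (hq : q.Monic)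
    {a : R} (ha : ¬ IsUnit a) (h : C a ∣ p - q) : p.natDegree = q.natDegree := by
  have : Nontrivial (R ⧸ Ideal.span {a}) :=
    Ideal.Quotient.nontrivial_iff.mpr (by rwa [Ne, Ideal.span_singleton_eq_top])
  rw [← hp.natDegree_map (Ideal.Quotient.mk (Ideal.span {a})), map_mk_span_singleton_eq_of_C_dvd_sub h,
    hq.natDegree_map]

lemma sq_dvd_prod_add_mul_sub {ι : Type*} [DecidableEq ι] (s : Finset ι) (a b : ι → R) (ε : R) :
    ε ^ 2 ∣ ∏ i ∈ s, (a i + ε * b i)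
      - (∏ i ∈ s, a i + ε * ∑ i ∈ s, b i * ∏ j ∈ s.erase i, a j) := by
  induction s using Finset.induction_on with
  | empty => simp
  | @insert i s hi ih =>
    obtain ⟨x, hx⟩ := ih
    have hsum : ∑ j ∈ insert i s, b j * ∏ k ∈ (insert i s).erase j, a k
        = b i * ∏ j ∈ s, a j + a i * ∑ j ∈ s, b j * ∏ k ∈ s.erase j, a k := by
      rw [sum_insert hi, erase_insert hi, mul_sum]
      congr 1
      refine sum_congr rfl fun j hj => ?_
      rw [erase_insert_of_ne (by rintro rfl; exact hi hj),
        prod_insert (fun h => hi (mem_of_mem_erase h))]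
      ring
    refine ⟨a i * x + b i * ∑ j ∈ s, b j * ∏ k ∈ s.erase j, a k + ε * (b i * x), ?_⟩
    rw [prod_insert hi, prod_insert hi, hsum]
    linear_combination (a i + ε * b i) * hx

lemma C_sq_dvd_sub_prod_add_C_mul {n : ℕ} {f d : R[X]} {g H : Fin n → R[X]} {ε b : R}
    (hH : ∑ k, H k * ∏ j ∈ univ.erase k, g j = C b * d) (hf : f - ∏ k, g k = C (ε * b) * d) :
    C ε ^ 2 ∣ f - ∏ k, (g k + C ε * H k) := by
  obtain ⟨x, hx⟩ := sq_dvd_prod_add_mul_sub univ g H (C ε)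
  rw [hH] at hx
  exact ⟨-x, by linear_combination hf - hx + d * (C_mul : C (ε * b) = C ε * C b)⟩

lemma Polynomial.Monic.degree_lt_of_sub_eq_C_mul [IsDomain R] {p q d : R[X]} (hp : p.Monic)
    (hq : q.Monic) {a : R} (ha0 : a ≠ 0) (ha : ¬ IsUnit a) (h : p - q = C a * d) :
    d.degree < q.natDegree := by
  by_cases hpq : p = q
  · rw [hpq, sub_self, eq_comm, mul_eq_zero, C_eq_zero] at h
    simp [h.resolve_left ha0]
  have hdeg : p.degree = q.natDegree := by
    rw [degree_eq_natDegree hp.ne_zero, hp.natDegree_eq_of_C_dvd_sub hq ha ⟨d, h⟩]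
  rw [← degree_C_mul ha0, ← h, ← hdeg]
  exact degree_sub_lt_left (by rw [hdeg, degree_eq_natDegree hq.ne_zero]) hp.ne_zero
    (by rw [hp.leadingCoeff, hq.leadingCoeff])

end Congruence

lemma Irreducible.associated_pow_of_dvd_of_not_dvd_pow_succ {R : Type*} [CommRing R] [IsDomain R]
    [IsDiscreteValuationRing R] {π x : R} (hπ : Irreducible π) {t : ℕ} (h : π ^ t ∣ x)
    (h' : ¬ π ^ (t + 1) ∣ x) : Associated (π ^ t) x := by
  obtain ⟨u, rfl⟩ := h
  have hu : IsUnit u := by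
    by_contra hu
    have : u ∈ IsLocalRing.maximalIdeal R := hu
    rw [hπ.maximalIdeal_eq, Ideal.mem_span_singleton] at this
    exact h' (pow_succ π t ▸ mul_dvd_mul_left _ this)
  exact ⟨hu.unit, rfl⟩

lemma resPos_eq_finSigmaFinEquiv {n : ℕ} {m : Fin n → ℕ} (q : (k : Fin n) × Fin (m k)) :
    resPos q = finSigmaFinEquiv q := by
  rw [finSigmaFinEquiv_apply, resPos]
  congr 1
  refine (sum_bij (fun i _ => Fin.castLE q.1.2.le i) (fun i _ => ?_)
    (fun _ _ _ _ h => Fin.castLE_injective _ h) (fun j hj => ?_) fun _ _ => rfl).symm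
  · exact mem_filter.mpr ⟨mem_univ _, Fin.lt_def.mpr i.2⟩
  · exact ⟨⟨j, Fin.lt_def.mp (mem_filter.mp hj).2⟩, mem_univ _, rfl⟩

open Matrix

lemma Matrix.exists_vecMul_eq_smul_of_det_dvd {ι R : Type*} [Fintype ι] [DecidableEq ι]
    [CommRing R] (A : Matrix ι ι R) {a : R} (ha : A.det ∣ a) (c : ι → R) :
    ∃ h : ι → R, h ᵥ* A = a • c := by
  obtain ⟨b, rfl⟩ := ha
  refine ⟨b • (c ᵥ* A.adjugate), ?_⟩
  rw [smul_vecMul, vecMul_vecMul, adjugate_mul, vecMul_smul,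
    vecMul_one, smul_smul, mul_comm]

section ResultantMatrix

variable {R : Type*} [CommRing R] {n : ℕ}

lemma vecMul_resMatrix_apply (g : Fin n → R[X]) (h : (k : Fin n) × Fin (g k).natDegree → R)
    (q : (k : Fin n) × Fin (g k).natDegree) :
    (h ᵥ* resMatrix g) q = (∑ k, (∑ i : Fin (g k).natDegree, C (h ⟨k, i⟩) * X ^ (i : ℕ))
      * ∏ j ∈ univ.erase k, g j).coeff (resPos q) := by
  rw [vecMul, dotProduct, ← univ_sigma_univ, sum_sigma, finsetSum_coeff]
  refine sum_congr rfl fun k _ => ?_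
  rw [sum_mul, finsetSum_coeff]
  refine sum_congr rfl fun i _ => ?_
  rw [mul_assoc, coeff_C_mul, mul_comm (X ^ _), coeff_mul_X_pow', resMatrix, mul_comm]

lemma degree_sum_mul_prod_erase_lt (g H : Fin n → R[X])
    (hH : ∀ k, (H k).degree < (g k).natDegree) :
    (∑ k, H k * ∏ j ∈ univ.erase k, g j).degree < ↑(∑ k, (g k).natDegree) := by
  refine (degree_sum_le _ _).trans_lt ((Finset.sup_lt_iff (WithBot.bot_lt_coe _)).mpr
    fun k _ => ?_)
  calc (H k * ∏ j ∈ univ.erase k, g j).degree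
      ≤ (H k).degree + (∏ j ∈ univ.erase k, g j).degree := degree_mul_le _ _
    _ < ↑((g k).natDegree + ∑ j ∈ univ.erase k, (g j).natDegree) := by
      by_cases h0 : ∏ j ∈ univ.erase k, g j = 0
      · rw [h0, degree_zero, WithBot.add_bot]
        exact WithBot.bot_lt_coe _
      rw [Nat.cast_add]
      exact WithBot.add_lt_add_of_lt_of_le (degree_eq_bot.not.mpr h0) (hH k)
        (degree_le_natDegree.trans (Nat.cast_le.mpr (natDegree_prod_le _ _)))
    _ = ↑(∑ k, (g k).natDegree) := by rw [add_sum_erase univ (fun j => (g j).natDegree) (mem_univ k)]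

lemma exists_sum_mul_prod_erase_eq_C_mul (g : Fin n → R[X]) {a : R} (ha : genRes g ∣ a)
    {d : R[X]} (hd : d.degree < ↑(∑ k, (g k).natDegree)) :
    ∃ H : Fin n → R[X], (∀ k, (H k).degree < (g k).natDegree) ∧
      ∑ k, H k * ∏ j ∈ univ.erase k, g j = C a * d := by
  obtain ⟨h, hh⟩ :=
    (resMatrix g).exists_vecMul_eq_smul_of_det_dvd ha fun q => d.coeff (resPos q)
  set H : Fin n → R[X] := fun k => ∑ i : Fin (g k).natDegree, C (h ⟨k, i⟩) * X ^ (i : ℕ)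
  have hH : ∀ k, (H k).degree < (g k).natDegree := fun k => degree_sum_fin_lt _
  refine ⟨H, hH, ext fun r => ?_⟩
  rw [coeff_C_mul]
  by_cases hr : r < ∑ k, (g k).natDegree
  · obtain ⟨q, rfl⟩ : ∃ q, resPos q = r := ⟨finSigmaFinEquiv.symm ⟨r, hr⟩,
      by rw [resPos_eq_finSigmaFinEquiv, Equiv.apply_symm_apply]⟩
    rw [← vecMul_resMatrix_apply, hh]
    rfl
  · have hr : ((∑ k, (g k).natDegree : ℕ) : WithBot ℕ) ≤ r := by exact_mod_cast not_lt.mp hr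
    rw [coeff_eq_zero_of_degree_lt ((degree_sum_mul_prod_erase_lt g H hH).trans_le hr),
      coeff_eq_zero_of_degree_lt (hd.trans_le hr), mul_zero]

lemma map_genRes_eq_of_map_eq {S : Type*} [CommRing S] (φ : R →+* S) {g g' : Fin n → R[X]}
    (hdeg : ∀ k, (g' k).natDegree = (g k).natDegree) (hmap : ∀ k, (g' k).map φ = (g k).map φ) :
    φ (genRes g') = φ (genRes g) := by
  let e : ((k : Fin n) × Fin (g k).natDegree) ≃ ((k : Fin n) × Fin (g' k).natDegree) :=
    Equiv.sigmaCongrRight fun k => finCongr (hdeg k).symm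
  have hpos : ∀ q, resPos (e q) = resPos q := by
    rintro ⟨k, i⟩
    simp only [resPos, e, Equiv.sigmaCongrRight_apply, hdeg]
    rfl
  rw [genRes, ← det_submatrix_equiv_self e, genRes, RingHom.map_det, RingHom.map_det]
  congr 1
  ext ⟨k, i⟩ q
  simp only [RingHom.mapMatrix_apply, map_apply, submatrix_apply, resMatrix, hpos, apply_ite φ,
    ← coeff_map, Polynomial.map_prod, hmap]
  rfl

lemma dvd_genRes_sub_of_C_dvd_sub {g g' : Fin n → R[X]} (hg : ∀ k, (g k).Monic)
    (hg' : ∀ k, (g' k).Monic) {a : R} (ha : ¬ IsUnit a) (h : ∀ k, C a ∣ g' k - g k) :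
    a ∣ genRes g' - genRes g := by
  rw [← Ideal.mem_span_singleton, ← Ideal.Quotient.eq]
  exact map_genRes_eq_of_map_eq _ (fun k => (hg' k).natDegree_eq_of_C_dvd_sub (hg k) ha (h k))
    fun k => map_mk_span_singleton_eq_of_C_dvd_sub (h k)

end ResultantMatrix

theorem hensel_step_general_general
    {R : Type*} [CommRing R] [IsDomain R] [IsDiscreteValuationRing R]
    (π : R) (hπ : Irreducible π)
    (f : Polynomial R) (hf : f.Monic)
    {n : ℕ} (g : Fin n → Polynomial R)
    (hmonic : ∀ k, (g k).Monic)
    (t : ℕ) (ht : π ^ t ∣ genRes g ∧ ¬ π ^ (t + 1) ∣ genRes g)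
    (s : ℕ) (hs : 2 * t + 1 ≤ s)
    (hcongr : C (π ^ s) ∣ (f - ∏ k, g k)) :
    (∃ g' : Fin n → Polynomial R, (∀ k, (g' k).Monic) ∧
        (∀ k, C (π ^ (s - t)) ∣ (g' k - g k)) ∧
        C (π ^ (2 * (s - t))) ∣ (f - ∏ k, g' k)) ∧
    (∀ g' : Fin n → Polynomial R, (∀ k, (g' k).Monic) →
        (∀ k, C (π ^ (s - t)) ∣ (g' k - g k)) →
        C (π ^ (2 * (s - t))) ∣ (f - ∏ k, g' k) →
        π ^ t ∣ genRes g' ∧ ¬ π ^ (t + 1) ∣ genRes g') := by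
  have hπ_pow : ∀ {m : ℕ}, m ≠ 0 → ¬ IsUnit (π ^ m) := fun hm =>
    (isUnit_pow_iff hm).not.mpr hπ.not_isUnit
  constructor
  · obtain ⟨d, hd⟩ := hcongr
    have hdeg_d : d.degree < ↑(∑ k, (g k).natDegree) := by
      rw [← natDegree_prod_of_monic _ _ fun k _ => hmonic k]
      exact hf.degree_lt_of_sub_eq_C_mul (monic_prod_of_monic _ _ fun k _ => hmonic k)
        (pow_ne_zero s hπ.ne_zero) (hπ_pow (by omega)) hd
    obtain ⟨H, hHdeg, hH⟩ := exists_sum_mul_prod_erase_eq_C_mul g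
      (hπ.associated_pow_of_dvd_of_not_dvd_pow_succ ht.1 ht.2).dvd' hdeg_d
    refine ⟨fun k => g k + C (π ^ (s - t)) * H k, fun k => ?_, fun k => ⟨H k, by ring⟩, ?_⟩
    · refine (hmonic k).add_of_left ?_
      rw [degree_C_mul (pow_ne_zero _ hπ.ne_zero), degree_eq_natDegree (hmonic k).ne_zero]
      exact hHdeg k
    · rw [pow_mul', C_pow]
      refine C_sq_dvd_sub_prod_add_C_mul hH ?_
      rwa [← pow_add, Nat.sub_add_cancel (by omega)]
  · intro g' hmonic' hcongr' _
    have hdvd := dvd_genRes_sub_of_C_dvd_sub hmonic hmonic' (hπ_pow (by omega)) hcongr'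
    have hpow_dvd : ∀ {e}, e ≤ s - t → π ^ e ∣ genRes g' - genRes g := fun he =>
      (pow_dvd_pow π he).trans hdvd
    exact ⟨(dvd_iff_dvd_of_dvd_sub (hpow_dvd (by omega))).mpr ht.1,
      (dvd_iff_dvd_of_dvd_sub (hpow_dvd (by omega))).not.mpr ht.2⟩

/-- **One Hensel lifting step (general case):** if `f ≡ ∏_k g_(k) mod π^s` with
`s ≥ 2t + 1`, `t = val_π(Res(g_(1), …, g_(n)))`, then there is an admissible lift
`(g̃_(k))_k`: monic polynomials with `g̃_(k) ≡ g_(k) mod π^{s−t}` and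
`f ≡ ∏_k g̃_(k) mod π^{2(s−t)}`; moreover every admissible lift has
`val_π(Res(g̃_(1), …, g̃_(n))) = t`. -/
theorem hensel_step_general
    {R : Type*} [CommRing R] [IsDomain R] [IsDiscreteValuationRing R]
    (π : R) (hπ : Irreducible π)
    (f : Polynomial R) (hf : f.Monic)
    {n : ℕ} (g : Fin n → Polynomial R)
    (hmonic : ∀ k, (g k).Monic) (hdeg : ∀ k, 1 ≤ (g k).natDegree)
    (hres : genRes g ≠ 0)
    (t : ℕ) (ht : π ^ t ∣ genRes g ∧ ¬ π ^ (t + 1) ∣ genRes g)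
    (s : ℕ) (hs : 2 * t + 1 ≤ s)
    (hcongr : C (π ^ s) ∣ (f - ∏ k, g k)) :
    (∃ g' : Fin n → Polynomial R, (∀ k, (g' k).Monic) ∧
        (∀ k, C (π ^ (s - t)) ∣ (g' k - g k)) ∧
        C (π ^ (2 * (s - t))) ∣ (f - ∏ k, g' k)) ∧
    (∀ g' : Fin n → Polynomial R, (∀ k, (g' k).Monic) →
        (∀ k, C (π ^ (s - t)) ∣ (g' k - g k)) →
        C (π ^ (2 * (s - t))) ∣ (f - ∏ k, g' k) →
        π ^ t ∣ genRes g' ∧ ¬ π ^ (t + 1) ∣ genRes g') :=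
  hensel_step_general_general π hπ f hf g hmonic t ht s hs hcongr
end

section
/- Let R be a discrete valuation ring with uniformizer π, f ∈ R[X] monic, g_(1),...,g_(n) ∈ R[X] monic of degree ≥ 1 with t := val_π(Res(g_(1),...,g_(n))) finite, s ≥ 2t+1, f ≡ ∏_k g_(k) mod π^s, and r ∈ [0, s−2t]. Suppose g̃_(1),...,g̃_(n), h̃_(1),...,h̃_(n) ∈ R[X] are monic with g̃_(k) ≡ g_(k) ≡ h̃_(k) mod π^{s−t} for all k, and ∏_k g̃_(k) ≡ ∏_k h̃_(k) mod π^{2(s−t)−r}. Then g̃_(k) ≡ h̃_(k) mod π^{2s−3t−r} for all k ∈ [1,n]. -/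
open Polynomial Finset

namespace Polynomial

variable {R : Type*} [CommRing R]

theorem natDegree_le_of_monic_of_C_dvd_sub {p q : R[X]} {c : R} (hp : p.Monic)
    (hc : ¬IsUnit c) (h : C c ∣ p - q) : p.natDegree ≤ q.natDegree := by
  refine le_natDegree_of_ne_zero fun hq => hc ?_
  have hdiff : (p - q).coeff p.natDegree = 1 := by
    rw [coeff_sub, hp.coeff_natDegree, hq, sub_zero]
  exact isUnit_of_dvd_one (hdiff ▸ (C_dvd_iff_dvd_coeff c _).1 h p.natDegree)

theorem degree_sub_lt_of_monic_of_C_dvd_sub {p q : R[X]} {c : R} (hp : p.Monic)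
    (hq : q.Monic) (hc : ¬IsUnit c) (h : C c ∣ p - q) : (p - q).degree < p.degree := by
  have : Nontrivial R := ⟨⟨c, 1, fun h1 => hc (h1 ▸ isUnit_one)⟩⟩
  have hpq : p.natDegree = q.natDegree := le_antisymm
    (natDegree_le_of_monic_of_C_dvd_sub hp hc h)
    (natDegree_le_of_monic_of_C_dvd_sub hq hc (by rwa [← dvd_neg, neg_sub]))
  refine degree_sub_lt_left ?_ hp.ne_zero (by rw [hp.leadingCoeff, hq.leadingCoeff])
  rw [degree_eq_natDegree hp.ne_zero, degree_eq_natDegree hq.ne_zero, hpq]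

theorem coeff_mul_eq_sum_fin {p : R[X]} {m : ℕ} (hp : p.degree < m) (q : R[X]) (N : ℕ) :
    (p * q).coeff N = ∑ i : Fin m, p.coeff i * (X ^ (i : ℕ) * q).coeff N := by
  refine .trans ?_ (sum_fin (fun i a => a * (X ^ i * q).coeff N) (fun _ => zero_mul _) hp).symm
  conv_lhs => rw [← p.sum_C_mul_X_pow_eq]
  simp only [Polynomial.sum, Finset.sum_mul, finsetSum_coeff, mul_assoc, coeff_C_mul]

end Polynomial

theorem Finset.sq_dvd_prod_sub_prod_sub_sum {R ι : Type*} [CommRing R] [DecidableEq ι]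
    (s : Finset ι) (a b : ι → R) {c : R} (h : ∀ i ∈ s, c ∣ a i - b i) :
    c ^ 2 ∣ ∏ i ∈ s, a i - ∏ i ∈ s, b i - ∑ i ∈ s, (a i - b i) * ∏ j ∈ s.erase i, b j := by
  induction s using Finset.induction_on with
  | empty => simp
  | insert i s hi ih =>
    have hsum : c ∣ ∑ k ∈ s, (a k - b k) * ∏ j ∈ s.erase k, b j :=
      dvd_sum fun k hk => (h k (mem_insert_of_mem hk)).mul_right _
    have herase : ∀ k ∈ s, (a k - b k) * ∏ j ∈ (insert i s).erase k, b j =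
        b i * ((a k - b k) * ∏ j ∈ s.erase k, b j) := fun k hk => by
      rw [erase_insert_of_ne (ne_of_mem_of_not_mem hk hi).symm,
        prod_insert fun hi' => hi (mem_of_mem_erase hi'), mul_left_comm]
    rw [prod_insert hi, prod_insert hi, sum_insert hi, erase_insert hi, sum_congr rfl fun k hk =>
      by rw [herase k hk], ← mul_sum]
    have key : a i * ∏ j ∈ s, a j - b i * ∏ j ∈ s, b j -
        ((a i - b i) * ∏ j ∈ s, b j + b i * ∑ k ∈ s, (a k - b k) * ∏ j ∈ s.erase k, b j) =
        a i * (∏ j ∈ s, a j - ∏ j ∈ s, b j - ∑ k ∈ s, (a k - b k) * ∏ j ∈ s.erase k, b j) +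
          (a i - b i) * ∑ k ∈ s, (a k - b k) * ∏ j ∈ s.erase k, b j := by ring
    rw [key]
    refine dvd_add ((ih fun k hk => h k (mem_insert_of_mem hk)).mul_left _) ?_
    exact sq c ▸ mul_dvd_mul (h i (mem_insert_self i s)) hsum

theorem Finset.sq_dvd_prod_sub_prod_sub_sum_of_dvd_sub {R ι : Type*} [CommRing R]
    [DecidableEq ι] (s : Finset ι) (a a' b : ι → R) {c : R} (ha : ∀ i ∈ s, c ∣ a i - b i)
    (ha' : ∀ i ∈ s, c ∣ a' i - b i) :
    c ^ 2 ∣ ∏ i ∈ s, a i - ∏ i ∈ s, a' i - ∑ i ∈ s, (a i - a' i) * ∏ j ∈ s.erase i, b j := by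
  have hsum : ∑ i ∈ s, (a i - a' i) * ∏ j ∈ s.erase i, b j =
      ∑ i ∈ s, (a i - b i) * ∏ j ∈ s.erase i, b j -
        ∑ i ∈ s, (a' i - b i) * ∏ j ∈ s.erase i, b j := by
    rw [← sum_sub_distrib]
    exact sum_congr rfl fun _ _ => by ring
  rw [hsum]
  convert dvd_sub (s.sq_dvd_prod_sub_prod_sub_sum a b ha)
    (s.sq_dvd_prod_sub_prod_sub_sum a' b ha') using 1
  ring

theorem Matrix.dvd_det_mul_of_forall_dvd_vecMul {ι R : Type*} [Fintype ι] [DecidableEq ι]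
    [CommRing R] {A : Matrix ι ι R} {w : ι → R} {c : R} (h : ∀ j, c ∣ vecMul w A j) (i : ι) :
    c ∣ A.det * w i := by
  have hadj : vecMul (vecMul w A) A.adjugate = A.det • w := by
    rw [vecMul_vecMul, mul_adjugate, vecMul_smul, vecMul_one]
  rw [← smul_eq_mul, ← Pi.smul_apply, ← hadj]
  exact dvd_sum fun j _ => (h j).mul_right _

theorem IsDiscreteValuationRing.pow_sub_dvd_of_pow_dvd_mul {R : Type*} [CommRing R] [IsDomain R]
    [IsDiscreteValuationRing R] {π x y : R} (hπ : Irreducible π) {a t : ℕ}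
    (hx : ¬π ^ (t + 1) ∣ x) (h : π ^ a ∣ x * y) : π ^ (a - t) ∣ y := by
  rcases le_or_gt a t with hat | hta
  · simp [Nat.sub_eq_zero_of_le hat]
  have hx0 : x ≠ 0 := by rintro rfl; exact hx (dvd_zero _)
  obtain ⟨m, u, rfl⟩ := eq_unit_mul_pow_irreducible hx0 hπ
  have hmt : m ≤ t := by
    by_contra! htm
    exact hx ((pow_dvd_pow π htm).mul_left _)
  have hm : π ^ m * π ^ (a - t) ∣ π ^ m * y := by
    rw [← pow_add, ← Units.dvd_mul_left (u := u), ← mul_assoc]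
    exact (pow_dvd_pow π (by omega)).trans h
  exact (mul_dvd_mul_iff_left (pow_ne_zero m hπ.ne_zero)).1 hm

theorem vecMul_resMatrix {R : Type*} [CommRing R] {n : ℕ} (g δ : Fin n → R[X])
    (hδ : ∀ k, (δ k).degree < (g k).natDegree) (q : (k : Fin n) × Fin (g k).natDegree) :
    Matrix.vecMul (fun p => (δ p.1).coeff p.2) (resMatrix g) q =
      (∑ k, δ k * ∏ j ∈ univ.erase k, g j).coeff (resPos q) := by
  simp only [Matrix.vecMul, dotProduct, finsetSum_coeff, ← univ_sigma_univ, sum_sigma]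
  refine sum_congr rfl fun k _ => ?_
  rw [coeff_mul_eq_sum_fin (hδ k)]
  refine sum_congr rfl fun i _ => ?_
  simp only [resMatrix, coeff_X_pow_mul', mul_ite, mul_zero]

theorem C_pow_sub_dvd_of_C_pow_dvd_sum_mul_prod_erase {R : Type*} [CommRing R] [IsDomain R]
    [IsDiscreteValuationRing R] {π : R} (hπ : Irreducible π) {n : ℕ} {g δ : Fin n → R[X]}
    (hδ : ∀ k, (δ k).degree < (g k).natDegree) {a t : ℕ} (hres : ¬π ^ (t + 1) ∣ genRes g)
    (h : C (π ^ a) ∣ ∑ k, δ k * ∏ j ∈ univ.erase k, g j) (k : Fin n) :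
    C (π ^ (a - t)) ∣ δ k := by
  rw [C_dvd_iff_dvd_coeff]
  intro i
  rcases lt_or_ge i (g k).natDegree with hi | hi
  · have hvec : ∀ q, π ^ a ∣ Matrix.vecMul (fun p => (δ p.1).coeff p.2) (resMatrix g) q :=
      fun q => vecMul_resMatrix g δ hδ q ▸ (C_dvd_iff_dvd_coeff _ _).1 h _
    exact IsDiscreteValuationRing.pow_sub_dvd_of_pow_dvd_mul hπ hres
      (Matrix.dvd_det_mul_of_forall_dvd_vecMul hvec ⟨k, i, hi⟩)
  · rw [coeff_eq_zero_of_degree_lt ((hδ k).trans_le (Nat.cast_le.2 hi))]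
    exact dvd_zero _

theorem hensel_step_uniqueness_general_general
    {R : Type*} [CommRing R] [IsDomain R] [IsDiscreteValuationRing R]
    (π : R) (hπ : Irreducible π)
    {n : ℕ} (g : Fin n → Polynomial R)
    (t : ℕ) (ht : π ^ t ∣ genRes g ∧ ¬ π ^ (t + 1) ∣ genRes g)
    (s : ℕ) (hs : 2 * t + 1 ≤ s)
    (r : ℕ)
    (g' h' : Fin n → Polynomial R)
    (hg'monic : ∀ k, (g' k).Monic) (hh'monic : ∀ k, (h' k).Monic)
    (hg' : ∀ k, C (π ^ (s - t)) ∣ (g' k - g k))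
    (hh' : ∀ k, C (π ^ (s - t)) ∣ (h' k - g k))
    (hprod : C (π ^ (2 * (s - t) - r)) ∣ ((∏ k, g' k) - ∏ k, h' k)) :
    ∀ k, C (π ^ (2 * s - 3 * t - r)) ∣ (g' k - h' k) := by
  have hunit : ¬IsUnit (π ^ (s - t)) := by
    rw [isUnit_pow_iff (by omega)]
    exact hπ.not_isUnit
  have hdeg : ∀ k, (g' k - h' k).degree < (g k).natDegree := fun k => calc
    (g' k - h' k).degree < (g' k).degree :=
      degree_sub_lt_of_monic_of_C_dvd_sub (hg'monic k) (hh'monic k) hunit <| by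
        simpa only [sub_sub_sub_cancel_right] using dvd_sub (hg' k) (hh' k)
    _ = (g' k).natDegree := degree_eq_natDegree (hg'monic k).ne_zero
    _ ≤ (g k).natDegree :=
      Nat.cast_le.2 (natDegree_le_of_monic_of_C_dvd_sub (hg'monic k) hunit (hg' k))
  have hsum : C (π ^ (2 * (s - t) - r)) ∣ ∑ k, (g' k - h' k) * ∏ j ∈ univ.erase k, g j := by
    have hsq := univ.sq_dvd_prod_sub_prod_sub_sum_of_dvd_sub g' h' g
      (fun k _ => hg' k) (fun k _ => hh' k)
    rw [← C_pow, ← pow_mul'] at hsq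
    simpa only [sub_sub_cancel] using
      dvd_sub hprod ((map_dvd C (pow_dvd_pow π (Nat.sub_le _ r))).trans hsq)
  intro k
  simpa only [show 2 * (s - t) - r - t = 2 * s - 3 * t - r by omega] using
    C_pow_sub_dvd_of_C_pow_dvd_sum_mul_prod_erase hπ hdeg ht.2 hsum k

/-- **Uniqueness estimate for lifts (general case):** if `g̃_(k) ≡ g_(k) ≡ h̃_(k) mod π^{s−t}`
for all `k` and `∏_k g̃_(k) ≡ ∏_k h̃_(k) mod π^{2(s−t)−r}` with `r ∈ [0, s−2t]`, then
`g̃_(k) ≡ h̃_(k) mod π^{2s−3t−r}` for all `k`. -/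
theorem hensel_step_uniqueness_general
    {R : Type*} [CommRing R] [IsDomain R] [IsDiscreteValuationRing R]
    (π : R) (hπ : Irreducible π)
    (f : Polynomial R) (hf : f.Monic)
    {n : ℕ} (g : Fin n → Polynomial R)
    (hmonic : ∀ k, (g k).Monic) (hdeg : ∀ k, 1 ≤ (g k).natDegree)
    (t : ℕ) (ht : π ^ t ∣ genRes g ∧ ¬ π ^ (t + 1) ∣ genRes g)
    (s : ℕ) (hs : 2 * t + 1 ≤ s)
    (hcongr : C (π ^ s) ∣ (f - ∏ k, g k))
    (r : ℕ) (hr : r ≤ s - 2 * t)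
    (g' h' : Fin n → Polynomial R)
    (hg'monic : ∀ k, (g' k).Monic) (hh'monic : ∀ k, (h' k).Monic)
    (hg' : ∀ k, C (π ^ (s - t)) ∣ (g' k - g k))
    (hh' : ∀ k, C (π ^ (s - t)) ∣ (h' k - g k))
    (hprod : C (π ^ (2 * (s - t) - r)) ∣ ((∏ k, g' k) - ∏ k, h' k)) :
    ∀ k, C (π ^ (2 * s - 3 * t - r)) ∣ (g' k - h' k) :=
  hensel_step_uniqueness_general_general π hπ g t ht s hs r g' h' hg'monic hh'monic hg' hh' hprod
end

section
/- Let R be a discrete valuation ring with uniformizer π. Let h_(1),...,h_(ℓ) ∈ R[X] be monic of degrees χ_(1) ≤ χ_(2) ≤ ... ≤ χ_(ℓ), each ≥ 1, with h_(k)(X) ≡ X^{χ_(k)} mod π for each k. Write ∏_{k∈[1,ℓ]} h_(k)(X) = ∑_{i∈[0,χ]} b_i X^i where χ = ∑_k χ_(k). Then for every i ∈ [0,χ], val_π(b_i) ≥ ℓ − max{ j ∈ [0,ℓ] : χ_(1)+...+χ_(j) ≤ i }. -/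
/-!
Write `h_k = X ^ χ_k + π g_k` and expand the product. The term taking `X ^ χ_k` from the factors
`k ∈ t` and `π g_k` from the others is divisible by `π ^ (ℓ - #t)` and lives in degrees
`≥ ∑_{k ∈ t} χ_k`, so it reaches `b_i` only if `∑_{k ∈ t} χ_k ≤ i`. As the `χ_k` are sorted, the
`#t` smallest of them then also sum to at most `i`, i.e. `#t` is at most the maximum in the bound.
-/

open Polynomial Finset

theorem Fin.val_le_val_of_strictMono {m n : ℕ} {e : Fin m → Fin n} (he : StrictMono e)
    (j : Fin m) : (j : ℕ) ≤ e j := by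
  simpa using card_le_card_of_injOn e (s := Iio j) (t := Iio (e j))
    (fun x hx => by simpa using he (by simpa using hx)) he.injective.injOn

theorem Monotone.sum_filter_val_lt_card_le_sum {ℓ : ℕ} {M : Type*} [AddCommMonoid M]
    [Preorder M] [IsOrderedAddMonoid M] {d : Fin ℓ → M} (hd : Monotone d) (t : Finset (Fin ℓ)) :
    ∑ k ∈ univ.filter (fun k : Fin ℓ => (k : ℕ) < #t), d k ≤ ∑ k ∈ t, d k := by
  have hc : #t ≤ ℓ := (card_le_univ t).trans_eq (Fintype.card_fin ℓ)
  have hfirst : univ.filter (fun k : Fin ℓ => (k : ℕ) < #t) =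
      univ.map (Fin.castLEOrderEmb hc).toEmbedding := by
    ext k
    simp only [mem_filter, mem_univ, true_and, mem_map]
    exact ⟨fun hk => ⟨⟨k, hk⟩, rfl⟩, by rintro ⟨j, _, rfl⟩; exact j.2⟩
  conv_rhs => rw [← t.map_orderEmbOfFin_univ rfl]
  rw [hfirst, sum_map, sum_map]
  exact sum_le_sum fun j _ =>
    hd (Fin.le_def.mpr (Fin.val_le_val_of_strictMono (t.orderEmbOfFin rfl).strictMono j))

namespace Polynomial

variable {R ι : Type*} [CommRing R]

theorem coeff_prod_X_pow_mul_prod_C_mul (a : R) (d : ι → ℕ) (g : ι → R[X]) (t u : Finset ι)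
    (i : ℕ) :
    ((∏ k ∈ t, X ^ d k) * ∏ k ∈ u, C a * g k).coeff i =
      if ∑ k ∈ t, d k ≤ i then a ^ #u * (∏ k ∈ u, g k).coeff (i - ∑ k ∈ t, d k) else 0 := by
  rw [prod_pow_eq_pow_sum, prod_mul_distrib, prod_const, ← C_pow, mul_left_comm, coeff_C_mul,
    coeff_X_pow_mul']
  split_ifs <;> simp

theorem pow_dvd_coeff_prod_X_pow_add_C_mul [DecidableEq ι] (s : Finset ι) (a : R) (d : ι → ℕ)
    (g : ι → R[X]) (i n : ℕ) (hn : ∀ t ⊆ s, ∑ k ∈ t, d k ≤ i → #t ≤ n) :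
    a ^ (#s - n) ∣ (∏ k ∈ s, (X ^ d k + C a * g k)).coeff i := by
  rw [prod_add, finsetSum_coeff]
  refine dvd_sum fun t ht => ?_
  rw [mem_powerset] at ht
  rw [coeff_prod_X_pow_mul_prod_C_mul]
  split_ifs with hti
  · have : #t ≤ n := hn t ht hti
    exact (pow_dvd_pow a (by rw [card_sdiff_of_subset ht]; omega)).mul_right _
  · exact dvd_zero _

end Polynomial

/-- **Valuation bound on the coefficients of a product of Eisenstein-type factors:**
if `h_(k) ≡ X^{χ_(k)} mod π` with `χ_(1) ≤ … ≤ χ_(ℓ)`, and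
`∏_k h_(k) = ∑_i b_i X^i`, then
`val_π(b_i) ≥ ℓ − max { j ∈ [0,ℓ] : χ_(1) + ⋯ + χ_(j) ≤ i }` for `i ∈ [0, χ]`. -/
theorem val_coeff_prod_ge
    {R : Type*} [CommRing R]
    (π : R)
    (ℓ : ℕ) (h : Fin ℓ → Polynomial R)
    (hsort : Monotone fun k => (h k).natDegree)
    (hX : ∀ k, C π ∣ (h k - X ^ (h k).natDegree)) :
    ∀ i ≤ ∑ k, (h k).natDegree,
      π ^ (ℓ - ((Finset.range (ℓ + 1)).filter
            (fun j => (∑ k ∈ Finset.univ.filter (fun k : Fin ℓ => (k : ℕ) < j),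
              (h k).natDegree) ≤ i)).max' ⟨0, by simp⟩)
        ∣ (∏ k, h k).coeff i := by
  intro i _
  choose g hg using hX
  rw [prod_congr rfl fun k _ => sub_eq_iff_eq_add'.mp (hg k)]
  nth_rw 1 [← card_fin ℓ]
  refine pow_dvd_coeff_prod_X_pow_add_C_mul univ π _ g i _ fun t _ hti => le_max' _ _ ?_
  exact mem_filter.mpr
    ⟨mem_range.mpr (Nat.lt_succ_of_le ((card_le_univ t).trans_eq (Fintype.card_fin ℓ))),
      (hsort.sum_filter_val_lt_card_le_sum t).trans hti⟩
end

section
/- Each nonzero Leibniz summand of det A(g_(1),...,g_(n)), where g_(k)(X) = ∏_{i∈[1,m_(k)]}(X − γ_(k)i) with the γ_(k)i algebraically independent indeterminates over a field K, is a homogeneous polynomial in the γ_(k)i of total degree d = ∑_{1≤k<ℓ≤n} m_(k)·m_(ℓ). Consequently det A(g_(1),...,g_(n)) is homogeneous of degree d in the roots. -/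
open Polynomial Finset

/-- The matrix `A(g_(1), …, g_(n))` whose block of `m_(k)` rows consists of the
successively shifted coefficient rows of `∏_{j ≠ k} g_(j)`. -/
noncomputable def resMatrixOf {R : Type*} [CommRing R] {n : ℕ} (m : Fin n → ℕ)
    (g : Fin n → Polynomial R) :
    Matrix ((k : Fin n) × Fin (m k)) ((k : Fin n) × Fin (m k)) R :=
  fun p q =>
    if (p.2 : ℕ) ≤ resPos q then
      (∏ j ∈ Finset.univ.erase p.1, g j).coeff (resPos q - (p.2 : ℕ))
    else 0

section Aux

variable {K : Type*} [Field K] {σ : Type*}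

lemma MvPolynomial.IsHomogeneous.congr_deg {p : MvPolynomial σ K} {d d' : ℕ}
    (h : p.IsHomogeneous d) (hd : d' = d) : p.IsHomogeneous d' := hd ▸ h

lemma prod_lin_natDegree {ι : Type*} (s : Finset ι) (a : ι → MvPolynomial σ K) :
    (∏ i ∈ s, (Polynomial.X - Polynomial.C (a i))).natDegree = s.card := by
  rw [Polynomial.natDegree_prod_of_monic _ _ (fun i _ => Polynomial.monic_X_sub_C _)]
  simp

lemma prod_lin_coeff_homog {ι : Type*} (s : Finset ι) (a : ι → σ) :
    ∀ t : ℕ, t ≤ s.card →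
    MvPolynomial.IsHomogeneous
      ((∏ i ∈ s, (Polynomial.X - Polynomial.C (MvPolynomial.X (R := K) (a i)))).coeff t)
      (s.card - t) := by
  induction s using Finset.cons_induction with
  | empty =>
    intro t ht
    obtain rfl : t = 0 := Nat.le_zero.mp (by simpa using ht)
    simpa using MvPolynomial.isHomogeneous_one σ K
  | cons i s his IH =>
    intro t ht
    rw [Finset.prod_cons, sub_mul, Polynomial.coeff_sub, Polynomial.coeff_C_mul,
      Finset.card_cons]
    rw [Finset.card_cons] at ht
    match t with
    | 0 =>
      rw [Polynomial.mul_coeff_zero, Polynomial.coeff_X_zero, zero_mul, zero_sub]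
      refine ((MvPolynomial.isHomogeneous_X K (a i)).mul
        (IH 0 (Nat.zero_le _))).neg.congr_deg (by omega)
    | (t' + 1) =>
      rw [Polynomial.coeff_X_mul]
      rcases le_or_gt (t' + 1) s.card with h | h
      · exact ((IH t' (by omega)).sub
          (((MvPolynomial.isHomogeneous_X K (a i)).mul
            (IH (t' + 1) h)).congr_deg (by omega))).congr_deg (by omega)
      · have hz : (∏ j ∈ s, (Polynomial.X -
            Polynomial.C (MvPolynomial.X (R := K) (a j)))).coeff (t' + 1) = 0 := by
          apply Polynomial.coeff_eq_zero_of_natDegree_lt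
          rw [prod_lin_natDegree]; omega
        rw [hz, mul_zero, sub_zero]
        exact (IH t' (by omega)).congr_deg (by omega)

end Aux

/-- `M_(k)` : the number of linear factors of `∏_{j ≠ k} g_(j)`. -/
def resMk {n : ℕ} (m : Fin n → ℕ) (k : Fin n) : ℕ := ∑ j ∈ Finset.univ.erase k, m j

lemma resMk_split {n : ℕ} (m : Fin n → ℕ) (k : Fin n) :
    resMk m k = (∑ j ∈ Finset.univ.filter (fun j => j < k), m j) +
      ∑ l ∈ Finset.Ioi k, m l := by
  unfold resMk
  rw [← Finset.sum_filter_add_sum_filter_not (Finset.univ.erase k) (fun j => j < k)]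
  congr 1
  · apply Finset.sum_congr _ (fun _ _ => rfl)
    ext j
    simp only [mem_filter, mem_erase, mem_univ, true_and, and_true]
    exact ⟨fun h => h.2, fun h => ⟨ne_of_lt h, h⟩⟩
  · apply Finset.sum_congr _ (fun _ _ => rfl)
    ext j
    simp only [mem_filter, mem_erase, mem_univ, true_and, and_true, mem_Ioi, not_lt]
    exact ⟨fun h => lt_of_le_of_ne h.2 (Ne.symm h.1), fun h => ⟨h.ne', h.le⟩⟩

lemma res_key_arith {n : ℕ} (m : Fin n → ℕ) :
    ∑ s : (k : Fin n) × Fin (m k), (resMk m s.1 + (s.2 : ℕ)) =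
      (∑ k, ∑ l ∈ Finset.Ioi k, m k * m l) +
        ∑ s : (k : Fin n) × Fin (m k), resPos s := by
  rw [← Finset.univ_sigma_univ, Finset.sum_sigma, Finset.sum_sigma]
  have key : ∀ k : Fin n, (∑ i : Fin (m k), (resMk m k + (i : ℕ))) =
      (∑ l ∈ Finset.Ioi k, m k * m l) +
        ∑ i : Fin (m k), ((∑ j ∈ Finset.univ.filter (fun j => j < k), m j) + (i : ℕ)) := by
    intro k
    simp only [Finset.sum_add_distrib, Finset.sum_const, Finset.card_univ,
      Fintype.card_fin, smul_eq_mul, resMk_split m k, mul_add, Finset.mul_sum]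
    ring
  rw [Finset.sum_congr rfl (fun k _ => key k), Finset.sum_add_distrib]
  exact congrArg _ (Finset.sum_congr rfl fun k _ => Finset.sum_congr rfl fun i _ => rfl)

section Entry

variable {K : Type*} [Field K] {n : ℕ} {m : Fin n → ℕ}
  {g : Fin n → Polynomial (MvPolynomial ((k : Fin n) × Fin (m k)) K)}

lemma res_entry_homog
    (hg : ∀ k, g k = ∏ i : Fin (m k),
      (Polynomial.X - Polynomial.C (MvPolynomial.X (⟨k, i⟩ : (k : Fin n) × Fin (m k)))))
    (s q : (k : Fin n) × Fin (m k)) (hne : resMatrixOf m g s q ≠ 0) :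
    resPos q ≤ resMk m s.1 + (s.2 : ℕ) ∧
      MvPolynomial.IsHomogeneous (resMatrixOf m g s q)
        (resMk m s.1 + (s.2 : ℕ) - resPos q) := by
  have hP : ∏ j ∈ Finset.univ.erase s.1, g j =
      ∏ p ∈ (Finset.univ.erase s.1).sigma (fun j => (Finset.univ : Finset (Fin (m j)))),
        (Polynomial.X - Polynomial.C (MvPolynomial.X (R := K) p)) := by
    rw [Finset.prod_sigma]
    exact Finset.prod_congr rfl fun j _ => hg j
  have hcard : ((Finset.univ.erase s.1).sigma
      (fun j => (Finset.univ : Finset (Fin (m j))))).card = resMk m s.1 := by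
    rw [Finset.card_sigma]
    simp [resMk]
  unfold resMatrixOf at hne ⊢
  by_cases hle : (s.2 : ℕ) ≤ resPos q
  · simp only [if_pos hle] at hne ⊢
    have hcoeff : (∏ j ∈ Finset.univ.erase s.1, g j).coeff (resPos q - (s.2 : ℕ)) ≠ 0 := hne
    have hdeg : resPos q - (s.2 : ℕ) ≤ resMk m s.1 := by
      by_contra h
      apply hcoeff
      apply Polynomial.coeff_eq_zero_of_natDegree_lt
      rw [hP, prod_lin_natDegree, hcard]
      omega
    refine ⟨by omega, ?_⟩
    rw [hP]
    refine (prod_lin_coeff_homog _ _ _ (by rw [hcard]; exact hdeg)).congr_deg ?_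
    rw [hcard]; omega
  · simp only [if_neg hle] at hne
    exact absurd rfl hne

end Entry

/-- **Homogeneity of the Leibniz summands of the generic resultant matrix:** over the
polynomial ring `K[γ_(k)i]` in algebraically independent roots, with
`g_(k) = ∏_i (X − γ_(k)i)`, each nonzero Leibniz summand `∏_s e_{s,τ(s)}` of
`det A(g_(1), …, g_(n))` is homogeneous of degree `d = ∑_{k<ℓ} m_(k)·m_(ℓ)` in the roots;
consequently `det A(g_(1), …, g_(n))` is homogeneous of degree `d`. -/
theorem leibniz_summands_homogeneous
    {K : Type*} [Field K] {n : ℕ} (m : Fin n → ℕ)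
    (g : Fin n → Polynomial (MvPolynomial ((k : Fin n) × Fin (m k)) K))
    (hg : ∀ k, g k = ∏ i : Fin (m k),
      (Polynomial.X - Polynomial.C (MvPolynomial.X (⟨k, i⟩ : (k : Fin n) × Fin (m k))))) :
    (∀ τ : Equiv.Perm ((k : Fin n) × Fin (m k)),
        (∏ s, resMatrixOf m g s (τ s)) ≠ 0 →
        MvPolynomial.IsHomogeneous (∏ s, resMatrixOf m g s (τ s))
          (∑ k, ∑ l ∈ Finset.Ioi k, m k * m l)) ∧
    MvPolynomial.IsHomogeneous (resMatrixOf m g).det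
      (∑ k, ∑ l ∈ Finset.Ioi k, m k * m l) := by
  have part1 : ∀ τ : Equiv.Perm ((k : Fin n) × Fin (m k)),
      (∏ s, resMatrixOf m g s (τ s)) ≠ 0 →
      MvPolynomial.IsHomogeneous (∏ s, resMatrixOf m g s (τ s))
        (∑ k, ∑ l ∈ Finset.Ioi k, m k * m l) := by
    intro τ hne
    have h1 : ∀ s, resMatrixOf m g s (τ s) ≠ 0 := by
      intro s h0
      exact hne (Finset.prod_eq_zero (Finset.mem_univ s) h0)
    have h2 := fun s => res_entry_homog hg s (τ s) (h1 s)
    refine (MvPolynomial.IsHomogeneous.prod Finset.univ _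
      (fun s => resMk m s.1 + (s.2 : ℕ) - resPos (τ s))
      (fun s _ => (h2 s).2)).congr_deg ?_
    rw [Finset.sum_tsub_distrib Finset.univ (fun s _ => (h2 s).1)]
    rw [Equiv.sum_comp τ resPos, res_key_arith m]
    omega
  refine ⟨part1, ?_⟩
  rw [Matrix.det_apply]
  apply MvPolynomial.IsHomogeneous.sum
  intro τ _
  have hprod : (∏ s, resMatrixOf m g s (τ⁻¹ s)) = ∏ i, resMatrixOf m g (τ i) i := by
    rw [← Equiv.prod_comp τ (fun i => resMatrixOf m g i (τ⁻¹ i))]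
    simp
  by_cases h0 : (∏ i, resMatrixOf m g (τ i) i) = 0
  · rw [h0, smul_zero]
    exact MvPolynomial.isHomogeneous_zero _ _ _
  · have hh := part1 τ⁻¹ (by rw [hprod]; exact h0)
    rw [hprod] at hh
    rcases Int.units_eq_one_or (Equiv.Perm.sign τ) with h | h <;> rw [h]
    · simpa using hh
    · rw [Units.smul_def]
      simpa using hh.neg
end
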